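/- arXiv:1604.06283 — 3 statements merged into one kernel-verified Lean document; each statement's English description precedes it below -/
import Mathlib

section
/- If X ~ Bin(n,p) and np is an integer, then E[X | X ≥ np] < np + √(np(1−p)). -/
/-- The binomial probability mass function: `P[Bin(n,p) = k]`. -/
noncomputable def binomialPMF (n : ℕ) (p : ℝ) (k : ℕ) : ℝ :=
  (n.choose k : ℝ) * p ^ k * (1 - p) ^ (n - k)

/-
Write `b k = P[X = k]`, `q = 1 - p` and `m = np`. The ratio identity `(k + 1) q b (k + 1) = (n - k) p b k`
makes `(k - np) b k` and `(k - np)² b k - (n - k) p b k` telescoping, which gives the upper-tail moments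
`∑_{k ≥ m} (k - np) b k = npq b m` and `∑_{k ≥ m} (k - np)² b k = npq (S - p b m)`, with `S = P[X ≥ m]`.
Hence `E[X | X ≥ m] = np + npq b m / S`, and Cauchy–Schwarz on the upper tail gives
`(npq b m)² ≤ npq (S - p b m) S < npq S²`, that is `npq b m / S < √(npq)`.
-/

open Finset

lemma le_of_cast_eq_mul_of_le_one {m n : ℕ} {p : ℝ} (hm : (m : ℝ) = n * p) (hp1 : p ≤ 1) :
    m ≤ n := by
  exact_mod_cast hm.trans_le (mul_le_of_le_one_right (Nat.cast_nonneg n) hp1)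

lemma binomialPMF_nonneg {p : ℝ} (hp : 0 ≤ p) (hp1 : p ≤ 1) (n k : ℕ) :
    0 ≤ binomialPMF n p k := by
  have : 0 ≤ 1 - p := by linarith
  unfold binomialPMF
  positivity

lemma binomialPMF_pos {p : ℝ} (hp : 0 < p) (hp1 : p < 1) {n k : ℕ} (hk : k ≤ n) :
    0 < binomialPMF n p k := by
  have : 0 < 1 - p := by linarith
  have := Nat.choose_pos hk
  unfold binomialPMF
  positivity

lemma binomialPMF_eq_zero_of_lt (p : ℝ) {n k : ℕ} (hk : n < k) : binomialPMF n p k = 0 := by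
  simp [binomialPMF, Nat.choose_eq_zero_of_lt hk]

lemma succ_mul_binomialPMF_succ (n k : ℕ) (p : ℝ) :
    ((k : ℝ) + 1) * (1 - p) * binomialPMF n p (k + 1) = (n - k) * p * binomialPMF n p k := by
  rcases lt_or_ge k n with hk | hk
  · obtain ⟨d, rfl⟩ : ∃ d, n = k + 1 + d := ⟨n - (k + 1), by omega⟩
    have hchoose : ((k + 1 + d).choose (k + 1) : ℝ) * (k + 1) = (k + 1 + d).choose k * (d + 1) := by
      have := Nat.choose_succ_right_eq (k + 1 + d) k
      rw [show k + 1 + d - k = d + 1 by omega] at this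
      exact_mod_cast this
    simp only [binomialPMF, show k + 1 + d - (k + 1) = d by omega, show k + 1 + d - k = d + 1 by omega]
    push_cast
    linear_combination (1 - p) * p ^ (k + 1) * (1 - p) ^ d * hchoose
  · rw [binomialPMF_eq_zero_of_lt p (by omega : n < k + 1)]
    rcases hk.eq_or_lt with rfl | hk
    · simp
    · simp [binomialPMF_eq_zero_of_lt p hk]

theorem sum_Icc_sub_mul_binomialPMF {m n : ℕ} (hmn : m ≤ n) (p : ℝ) :
    ∑ k ∈ Icc m n, ((k : ℝ) - n * p) * binomialPMF n p k = m * (1 - p) * binomialPMF n p m := by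
  set T : ℕ → ℝ := fun k ↦ k * (1 - p) * binomialPMF n p k
  have hT (k : ℕ) : ((k : ℝ) - n * p) * binomialPMF n p k = -(T (k + 1) - T k) := by
    simp only [T]
    push_cast
    linear_combination succ_mul_binomialPMF_succ n k p
  rw [sum_congr rfl fun k _ ↦ hT k, sum_neg_distrib, sum_Icc_sub hmn]
  simp only [T, binomialPMF_eq_zero_of_lt p n.lt_succ_self]
  ring

theorem sum_Icc_sub_sq_mul_binomialPMF {m n : ℕ} (hmn : m ≤ n) (p : ℝ) :
    ∑ k ∈ Icc m n, ((k : ℝ) - n * p) ^ 2 * binomialPMF n p k =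
      (m - n * p) * m * (1 - p) * binomialPMF n p m +
        p * ∑ k ∈ Icc m n, ((n : ℝ) - k) * binomialPMF n p k := by
  set W : ℕ → ℝ := fun k ↦ (k - n * p) * k * (1 - p) * binomialPMF n p k
  have hW (k : ℕ) : ((k : ℝ) - n * p) ^ 2 * binomialPMF n p k =
      -(W (k + 1) - W k) + p * (((n : ℝ) - k) * binomialPMF n p k) := by
    simp only [W]
    push_cast
    linear_combination (k + 1 - n * p) * succ_mul_binomialPMF_succ n k p
  rw [sum_congr rfl fun k _ ↦ hW k, sum_add_distrib, sum_neg_distrib, sum_Icc_sub hmn, ← mul_sum]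
  simp only [W, binomialPMF_eq_zero_of_lt p n.lt_succ_self]
  ring

theorem sqrt_mul_binomialPMF_lt_sum_Icc {n m : ℕ} {p : ℝ} (hn : 0 < n) (hp : 0 < p) (hp1 : p < 1)
    (hm : (m : ℝ) = n * p) :
    √(n * p * (1 - p)) * binomialPMF n p m < ∑ k ∈ Icc m n, binomialPMF n p k := by
  have hmn : m ≤ n := le_of_cast_eq_mul_of_le_one hm hp1.le
  set v := (n : ℝ) * p * (1 - p)
  set S := ∑ k ∈ Icc m n, binomialPMF n p k
  set b := binomialPMF n p m
  have hv : 0 < v := mul_pos (mul_pos (Nat.cast_pos.2 hn) hp) (by linarith)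
  have hb : 0 < b := binomialPMF_pos hp hp1 hmn
  have hbS : b ≤ S := single_le_sum (fun k _ ↦ binomialPMF_nonneg hp.le hp1.le n k)
    (left_mem_Icc.2 hmn)
  have hfirst : ∑ k ∈ Icc m n, ((k : ℝ) - n * p) * binomialPMF n p k = v * b := by
    rw [sum_Icc_sub_mul_binomialPMF hmn, hm]
  have hsecond : ∑ k ∈ Icc m n, ((k : ℝ) - n * p) ^ 2 * binomialPMF n p k = v * S - p * v * b := by
    have hsplit : ∑ k ∈ Icc m n, ((n : ℝ) - k) * binomialPMF n p k =
        (n - n * p) * S - ∑ k ∈ Icc m n, ((k : ℝ) - n * p) * binomialPMF n p k := by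
      rw [mul_sum, ← sum_sub_distrib]
      exact sum_congr rfl fun k _ ↦ by ring
    rw [sum_Icc_sub_sq_mul_binomialPMF hmn, hsplit, hfirst, hm]
    ring
  have hCS := sum_sq_le_sum_mul_sum_of_sq_le_mul (Icc m n)
    (r := fun k ↦ ((k : ℝ) - n * p) * binomialPMF n p k)
    (f := fun k ↦ ((k : ℝ) - n * p) ^ 2 * binomialPMF n p k) (g := binomialPMF n p)
    (fun k _ ↦ mul_nonneg (sq_nonneg _) (binomialPMF_nonneg hp.le hp1.le n k))
    (fun k _ ↦ binomialPMF_nonneg hp.le hp1.le n k) (fun k _ ↦ (by ring : _ = _).le)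
  rw [hfirst, hsecond] at hCS
  have hvb : v * b ^ 2 ≤ S ^ 2 - p * b * S :=
    le_of_mul_le_mul_left (by linarith) hv
  refine lt_of_pow_lt_pow_left₀ 2 (hb.le.trans hbS) ?_
  rw [mul_pow, Real.sq_sqrt hv.le]
  nlinarith [mul_pos (mul_pos hp hb) (hb.trans_le hbS)]

theorem binomial_integer_mean_tail_cond_exp_lt
    (n : ℕ) (hn : 0 < n) (p : ℝ) (hp : 0 < p) (hp1 : p < 1)
    (m : ℕ) (hm : (m : ℝ) = n * p) :
    (∑ k ∈ Finset.Icc m n, (k : ℝ) * binomialPMF n p k) /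
      (∑ k ∈ Finset.Icc m n, binomialPMF n p k)
      < n * p + Real.sqrt (n * p * (1 - p)) := by
  have hmn : m ≤ n := le_of_cast_eq_mul_of_le_one hm hp1.le
  set v := (n : ℝ) * p * (1 - p)
  set S := ∑ k ∈ Icc m n, binomialPMF n p k
  have htail : √v * binomialPMF n p m < S := sqrt_mul_binomialPMF_lt_sum_Icc hn hp hp1 hm
  have hS : 0 < S := (mul_nonneg (Real.sqrt_nonneg v)
    (binomialPMF_nonneg hp.le hp1.le n m)).trans_lt htail
  have hmean : ∑ k ∈ Icc m n, (k : ℝ) * binomialPMF n p k = n * p * S + v * binomialPMF n p m := by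
    have hfirst := sum_Icc_sub_mul_binomialPMF hmn p
    rw [hm] at hfirst
    rw [mul_sum, ← sub_eq_iff_eq_add', ← sum_sub_distrib, ← hfirst]
    exact sum_congr rfl fun k _ ↦ by ring
  have hv : 0 < v := mul_pos (mul_pos (Nat.cast_pos.2 hn) hp) (by linarith)
  rw [div_lt_iff₀ hS, hmean, add_mul, add_lt_add_iff_left]
  calc v * binomialPMF n p m = √v * (√v * binomialPMF n p m) := by
        rw [← mul_assoc, Real.mul_self_sqrt hv.le]
    _ < √v * S := by gcongr
end

section
/- For fixed positive integers n and k < m ≤ n, the function p ↦ P[Bin(n,p) ≥ m] / P[Bin(n,p) ≥ k] is monotone increasing on (0,1). -/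
/-- The upper tail `P[Bin(n,p) ≥ m]`. -/
noncomputable def binomialTail (n : ℕ) (p : ℝ) (m : ℕ) : ℝ :=
  ∑ j ∈ Finset.Icc m n, binomialPMF n p j

open Finset

theorem Finset.sum_mul_sum_lt_sum_mul_sum {ι R : Type*} [CommSemiring R] [PartialOrder R]
    [IsOrderedCancelAddMonoid R] {s t : Finset ι} {f g : ι → R}
    (hs : s.Nonempty) (ht : t.Nonempty) (h : ∀ j ∈ s, ∀ i ∈ t, f i * g j < f j * g i) :
    (∑ i ∈ t, f i) * ∑ j ∈ s, g j < (∑ j ∈ s, f j) * ∑ i ∈ t, g i := by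
  rw [sum_mul_sum, sum_mul_sum, sum_comm]
  exact sum_lt_sum_of_nonempty hs fun j hj => sum_lt_sum_of_nonempty ht fun i hi => h j hj i hi

lemma binomialPMF_pos_s11 {n j : ℕ} {p : ℝ} (hp : p ∈ Set.Ioo (0 : ℝ) 1) (hj : j ≤ n) :
    0 < binomialPMF n p j := by
  obtain ⟨hp0, hp1⟩ := hp
  have hc : (0 : ℝ) < n.choose j := mod_cast Nat.choose_pos hj
  have h1p : (0 : ℝ) < 1 - p := sub_pos.mpr hp1
  unfold binomialPMF
  positivity

lemma binomialTail_pos {n m : ℕ} {p : ℝ} (hp : p ∈ Set.Ioo (0 : ℝ) 1) (hm : m ≤ n) :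
    0 < binomialTail n p m :=
  sum_pos (fun _ hj => binomialPMF_pos_s11 hp (mem_Icc.mp hj).2) ⟨m, mem_Icc.mpr ⟨le_rfl, hm⟩⟩

lemma binomialTail_eq_sum_Ico_add {n k m : ℕ} (p : ℝ) (hkm : k ≤ m) (hmn : m ≤ n + 1) :
    binomialTail n p k = (∑ j ∈ Ico k m, binomialPMF n p j) + binomialTail n p m := by
  simp only [binomialTail, ← Finset.Ico_add_one_right_eq_Icc]
  exact (sum_Ico_consecutive _ hkm hmn).symm

lemma binomialPMF_mul_lt_mul {n i j : ℕ} {p q : ℝ} (hp : 0 < p) (hpq : p < q) (hq : q < 1)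
    (hji : j < i) (hin : i ≤ n) :
    binomialPMF n p i * binomialPMF n q j < binomialPMF n p j * binomialPMF n q i := by
  obtain ⟨d, hd, rfl⟩ : ∃ d, 0 < d ∧ i = j + d := ⟨i - j, by omega, by omega⟩
  have hnj : n - j = n - (j + d) + d := by omega
  have hci : (0 : ℝ) < n.choose (j + d) := mod_cast Nat.choose_pos hin
  have hcj : (0 : ℝ) < n.choose j := mod_cast Nat.choose_pos (by omega)
  have h1p : 0 < 1 - p := by linarith
  have h1q : 0 < 1 - q := by linarith
  have hq0 : 0 < q := hp.trans hpq
  have hcommon : 0 < (n.choose (j + d) : ℝ) * n.choose j * p ^ j * q ^ j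
      * (1 - p) ^ (n - (j + d)) * (1 - q) ^ (n - (j + d)) := by positivity
  have hodds : p ^ d * (1 - q) ^ d < (1 - p) ^ d * q ^ d := by
    simpa only [mul_pow] using
      pow_lt_pow_left₀ (by nlinarith : p * (1 - q) < (1 - p) * q) (mul_pos hp h1q).le hd.ne'
  unfold binomialPMF
  rw [hnj]
  calc _ = _ * (p ^ d * (1 - q) ^ d) := by ring
    _ < _ * ((1 - p) ^ d * q ^ d) := mul_lt_mul_of_pos_left hodds hcommon
    _ = _ := by ring

theorem binomial_tail_ratio_strictMono_general
    (n k m : ℕ) (hkm : k < m) (hmn : m ≤ n) :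
    StrictMonoOn (fun p : ℝ => binomialTail n p m / binomialTail n p k)
      (Set.Ioo (0 : ℝ) 1) := by
  intro p hp q hq hpq
  have hkn : k ≤ n := by omega
  have hcross : binomialTail n p m * ∑ j ∈ Ico k m, binomialPMF n q j
      < (∑ j ∈ Ico k m, binomialPMF n p j) * binomialTail n q m :=
    sum_mul_sum_lt_sum_mul_sum ⟨k, by simpa⟩ ⟨m, by simpa⟩ fun j hj i hi =>
      binomialPMF_mul_lt_mul hp.1 hpq hq.2 ((mem_Ico.mp hj).2.trans_le (mem_Icc.mp hi).1)
        (mem_Icc.mp hi).2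
  rw [div_lt_div_iff₀ (binomialTail_pos hp hkn) (binomialTail_pos hq hkn),
    binomialTail_eq_sum_Ico_add p hkm.le (by omega),
    binomialTail_eq_sum_Ico_add q hkm.le (by omega)]
  linear_combination hcross

/-- For `k < m ≤ n`, the map `p ↦ P[Bin(n,p) ≥ m] / P[Bin(n,p) ≥ k]`
is monotone increasing on `(0,1)`. -/
theorem binomial_tail_ratio_strictMono
    (n k m : ℕ) (hn : 0 < n) (hkm : k < m) (hmn : m ≤ n) :
    StrictMonoOn (fun p : ℝ => binomialTail n p m / binomialTail n p k)
      (Set.Ioo (0 : ℝ) 1) :=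
  binomial_tail_ratio_strictMono_general n k m hkm hmn
end

section
/- For 0 < λ < μ and k a nonnegative integer with P[Poi(λ) ≥ k] > 0, we have E[Poi(λ) | Poi(λ) ≥ k] ≤ E[Poi(μ) | Poi(μ) ≥ k]. -/
/-!
Poisson laws are ordered in the likelihood ratio: `poissonPMF μ j / poissonPMF λ j` is
proportional to `(μ / λ) ^ j`, which increases with `j`. Conditioning both laws on `{j ≥ k}`
preserves this order, and a likelihood ratio order `p ≤ q` gives `E_p[x] ≤ E_q[x]` for every
nondecreasing `x`: symmetrizing the double sum, `(∑ x p) (∑ q) - (∑ x q) (∑ p)` becomes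
`-½ ∑_{i,j} (x i - x j) (q i p j - p i q j)`, and every term of the last sum is nonnegative.
-/

/-- The Poisson probability mass function: `P[Poi(λ) = k]`. -/
noncomputable def poissonPMF (lam : ℝ) (k : ℕ) : ℝ :=
  Real.exp (-lam) * lam ^ k / (Nat.factorial k)

/-- `q` dominates `p` in the likelihood ratio order (`q / p` is nondecreasing, written without
division). -/
def LikelihoodRatioLE {ι : Type*} [LE ι] (p q : ι → ℝ) : Prop :=
  ∀ ⦃i j⦄, j ≤ i → p i * q j ≤ q i * p j

theorem Summable.ite_le {ι : Type*} [Preorder ι] [DecidableLE ι] {f : ι → ℝ} (hf : Summable f)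
    (k : ι) :
    Summable fun j => if k ≤ j then f j else 0 := by
  refine (hf.indicator (Set.Ici k)).congr fun j => ?_
  simp only [Set.indicator_apply, Set.mem_Ici]

namespace LikelihoodRatioLE

variable {ι : Type*} [LinearOrder ι] {p q x : ι → ℝ}

theorem tail (h : LikelihoodRatioLE p q) (k : ι) :
    LikelihoodRatioLE (fun j => if k ≤ j then p j else 0) (fun j => if k ≤ j then q j else 0) := by
  intro i j hji
  by_cases hj : k ≤ j
  · simpa [hj, hj.trans hji] using h hji
  · simp [hj]

theorem add_swap_le (h : LikelihoodRatioLE p q) (hx : Monotone x) (i j : ι) :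
    x i * p i * q j + x j * p j * q i ≤ x i * q i * p j + x j * q j * p i := by
  rcases le_total j i with hji | hij
  · nlinarith [mul_nonneg (sub_nonneg.2 (hx hji)) (sub_nonneg.2 (h hji))]
  · nlinarith [mul_nonneg (sub_nonneg.2 (hx hij)) (sub_nonneg.2 (h hij))]

theorem tsum_mul_tsum_le (h : LikelihoodRatioLE p q) (hx : Monotone x) (hx₀ : 0 ≤ x)
    (hp : 0 ≤ p) (hq : 0 ≤ q) (hps : Summable p) (hqs : Summable q)
    (hxp : Summable fun i => x i * p i) (hxq : Summable fun i => x i * q i) :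
    (∑' i, x i * p i) * ∑' j, q j ≤ (∑' i, x i * q i) * ∑' j, p j := by
  set F : ι × ι → ℝ := fun z => x z.1 * p z.1 * q z.2
  set G : ι × ι → ℝ := fun z => x z.1 * q z.1 * p z.2
  have hF : Summable F := hxp.mul_of_nonneg hqs (fun i => mul_nonneg (hx₀ i) (hp i)) hq
  have hG : Summable G := hxq.mul_of_nonneg hps (fun i => mul_nonneg (hx₀ i) (hq i)) hp
  have summable_swap {f : ι × ι → ℝ} (hf : Summable f) : Summable fun z : ι × ι => f z.swap :=
    (Equiv.prodComm ι ι).summable_iff.2 hf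
  have tsum_swap (f : ι × ι → ℝ) : ∑' z : ι × ι, f z.swap = ∑' z, f z :=
    (Equiv.prodComm ι ι).tsum_eq f
  have hsym : ∑' z : ι × ι, (F z + F z.swap) ≤ ∑' z : ι × ι, (G z + G z.swap) :=
    Summable.tsum_le_tsum (fun z => h.add_swap_le hx z.1 z.2)
      (hF.add (summable_swap hF)) (hG.add (summable_swap hG))
  rw [hF.tsum_add (summable_swap hF), hG.tsum_add (summable_swap hG), tsum_swap,
    tsum_swap] at hsym
  rw [hxp.tsum_mul_tsum hqs hF, hxq.tsum_mul_tsum hps hG]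
  linarith

theorem tail_mean_le (h : LikelihoodRatioLE p q) (hx : Monotone x) (hx₀ : 0 ≤ x)
    (hp : 0 ≤ p) (hq : 0 ≤ q) (hps : Summable p) (hqs : Summable q)
    (hxp : Summable fun i => x i * p i) (hxq : Summable fun i => x i * q i) (k : ι)
    (hp_tail : 0 < ∑' j, if k ≤ j then p j else 0)
    (hq_tail : 0 < ∑' j, if k ≤ j then q j else 0) :
    (∑' j, if k ≤ j then x j * p j else 0) / (∑' j, if k ≤ j then p j else 0)
      ≤ (∑' j, if k ≤ j then x j * q j else 0) / (∑' j, if k ≤ j then q j else 0) := by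
  rw [div_le_div_iff₀ hp_tail hq_tail]
  simpa only [mul_ite, mul_zero] using (h.tail k).tsum_mul_tsum_le hx hx₀
    (fun j => ite_nonneg (hp j) le_rfl) (fun j => ite_nonneg (hq j) le_rfl)
    (hps.ite_le k) (hqs.ite_le k)
    (by simpa only [mul_ite, mul_zero] using hxp.ite_le k)
    (by simpa only [mul_ite, mul_zero] using hxq.ite_le k)

end LikelihoodRatioLE

section Poisson

variable {lam mu : ℝ}

theorem poissonPMF_nonneg (h : 0 ≤ lam) : 0 ≤ poissonPMF lam := fun j => by
  unfold poissonPMF; positivity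

theorem poissonPMF_pos (h : 0 < lam) (j : ℕ) : 0 < poissonPMF lam j := by
  unfold poissonPMF; positivity

theorem summable_poissonPMF : Summable (poissonPMF lam) := by
  refine ((Real.summable_pow_div_factorial lam).mul_left (Real.exp (-lam))).congr fun j => ?_
  rw [poissonPMF, mul_div_assoc]

theorem succ_mul_poissonPMF_succ (j : ℕ) :
    (j + 1 : ℕ) * poissonPMF lam (j + 1) = lam * poissonPMF lam j := by
  simp only [poissonPMF, Nat.factorial_succ, Nat.cast_mul, pow_succ]
  field_simp

theorem summable_mul_poissonPMF : Summable fun j : ℕ => (j : ℝ) * poissonPMF lam j := by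
  rw [← summable_nat_add_iff 1]
  simpa only [succ_mul_poissonPMF_succ] using summable_poissonPMF.mul_left lam

theorem poissonPMF_likelihoodRatioLE (h₀ : 0 ≤ lam) (h : lam ≤ mu) :
    LikelihoodRatioLE (poissonPMF lam) (poissonPMF mu) := by
  intro i j hji
  obtain ⟨d, rfl⟩ := Nat.exists_eq_add_of_le hji
  have hmu : 0 ≤ mu := h₀.trans h
  have hpow : lam ^ (j + d) * mu ^ j ≤ mu ^ (j + d) * lam ^ j :=
    calc lam ^ (j + d) * mu ^ j = lam ^ j * mu ^ j * lam ^ d := by ring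
      _ ≤ lam ^ j * mu ^ j * mu ^ d := by gcongr
      _ = mu ^ (j + d) * lam ^ j := by ring
  calc poissonPMF lam (j + d) * poissonPMF mu j
      = Real.exp (-lam) * Real.exp (-mu) / ((j + d).factorial * j.factorial)
          * (lam ^ (j + d) * mu ^ j) := by unfold poissonPMF; ring
    _ ≤ Real.exp (-lam) * Real.exp (-mu) / ((j + d).factorial * j.factorial)
          * (mu ^ (j + d) * lam ^ j) := by gcongr
    _ = poissonPMF mu (j + d) * poissonPMF lam j := by unfold poissonPMF; ring

end Poisson

/-- The Poisson tail conditional expectation is monotone in the mean. -/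
theorem poisson_tail_cond_exp_monotone
    (lam mu : ℝ) (hlam : 0 < lam) (hlm : lam < mu) (k : ℕ)
    (hpos : 0 < ∑' j : ℕ, if k ≤ j then poissonPMF lam j else 0) :
    (∑' j : ℕ, if k ≤ j then (j : ℝ) * poissonPMF lam j else 0) /
        (∑' j : ℕ, if k ≤ j then poissonPMF lam j else 0)
      ≤ (∑' j : ℕ, if k ≤ j then (j : ℝ) * poissonPMF mu j else 0) /
        (∑' j : ℕ, if k ≤ j then poissonPMF mu j else 0) := by
  have hmu : 0 < mu := hlam.trans hlm
  have hpos_mu : 0 < ∑' j : ℕ, if k ≤ j then poissonPMF mu j else 0 :=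
    (summable_poissonPMF.ite_le k).tsum_pos
      (fun j => ite_nonneg (poissonPMF_nonneg hmu.le j) le_rfl) k
      (by simpa using poissonPMF_pos hmu k)
  exact (poissonPMF_likelihoodRatioLE hlam.le hlm.le).tail_mean_le Nat.mono_cast
    (fun j => Nat.cast_nonneg j) (poissonPMF_nonneg hlam.le) (poissonPMF_nonneg hmu.le)
    summable_poissonPMF summable_poissonPMF summable_mul_poissonPMF summable_mul_poissonPMF
    k hpos hpos_mu
end
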